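/- For every sequential type τ, the run set ⟦τ⟧ is inhabited: ⊥_τ ∈ ⟦τ⟧. -/

import Mathlib

/-- Terms of the sequential λ-calculus in de Bruijn representation
(so terms are automatically identified up to α-equivalence):
nil `*`, variable prefix `x.M`, push/application `[N].M`,
and pop/abstraction `<x>.M`. -/
inductive STm : Type
  | star : STm
  | var  : Nat → STm → STm
  | push : STm → STm → STm
  | pop  : STm → STm

namespace STm

/-- Lifting of a renaming under a binder. -/
def liftF (f : Nat → Nat) : Nat → Nat
  | 0 => 0
  | n+1 => f n + 1

/-- Renaming of de Bruijn indices. -/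
def rename (f : Nat → Nat) : STm → STm
  | star => star
  | var n M => var (f n) (rename f M)
  | push N M => push (rename f N) (rename f M)
  | pop M => pop (rename (liftF f) M)

/-- Capture-avoiding composition `N ; M`. -/
def comp : STm → STm → STm
  | star, P => P
  | var n N, P => var n (comp N P)
  | push Q N, P => push Q (comp N P)
  | pop N, P => pop (comp N (rename Nat.succ P))

/-- Lifting of a substitution under a binder. -/
def liftS (σ : Nat → STm) : Nat → STm
  | 0 => var 0 star
  | n+1 => rename Nat.succ (σ n)

/-- Capture-avoiding simultaneous substitution; note
`{N/x}(x.M) = N ; {N/x}M`. -/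
def subst (σ : Nat → STm) : STm → STm
  | star => star
  | var n M => comp (σ n) (subst σ M)
  | push N M => push (subst σ N) (subst σ M)
  | pop M => pop (subst (liftS σ) M)

/-- Capture-avoiding substitution `{N/x}M` of `N` for the variable bound
immediately outside `M`. -/
def subst1 (N : STm) : STm → STm :=
  subst (fun n => match n with | 0 => N | n+1 => var n star)

end STm

/-- Machine states: a stack of terms (written bottom-first, so the top
element is the last element of the list) together with a term. -/
abbrev SState := List STm × STm

/-- The transitions of the sequential stack machine:
`(S, [N].M) → (S·N, M)` and `(S·N, <x>.M) → (S, {N/x}M)`. -/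
inductive SMStep : SState → SState → Prop
  | push (S : List STm) (N M : STm) : SMStep (S, .push N M) (S ++ [N], M)
  | pop (S : List STm) (N M : STm) : SMStep (S ++ [N], .pop M) (S, STm.subst1 N M)

/-- A run of the sequential machine: a finite sequence of transitions. -/
def SRun : SState → SState → Prop := Relation.ReflTransGen SMStep

/-- Sequential types `ρ_n…ρ_1 ⟹ τ_1…τ_m`: an implication between two
finite vectors of sequential types. The first list is the input vector
as written (i.e. `arr (rev ρ⃗) τ⃗` represents `rev(ρ⃗) ⟹ τ⃗`). -/
inductive STy : Type
  | arr : List STy → List STy → STy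

mutual
/-- The run set `⟦τ⟧` of a sequential type `τ = rev(σ⃗) ⟹ τ⃗`: the terms `M`
such that for every stack `S ∈ ⟦σ⃗⟧` there are a stack `T ∈ ⟦τ⃗⟧` and a
machine run `(S,M) ⇓ (T,*)`. -/
def RunSet : STy → STm → Prop
  | .arr ins outs => fun M =>
      ∀ S : List STm, StackSet ins S.reverse →
        ∃ T : List STm, StackSet outs T ∧ SRun (S, M) (T, .star)
/-- The set `⟦τ_1…τ_n⟧` of stacks `ε·N_1·…·N_n` with each `N_i ∈ ⟦τ_i⟧`
(the type vector and the stack both listed bottom-first). -/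
def StackSet : List STy → List STm → Prop
  | [], S => S = []
  | _ :: _, [] => False
  | τ :: τs, N :: S => RunSet τ N ∧ StackSet τs S
end

/-- Iterated abstraction `<x_n>.….<x_1>.M`. -/
def popsN : Nat → STm → STm
  | 0, M => M
  | k+1, M => .pop (popsN k M)

mutual
/-- The canonical inhabitant `⊥_τ` of a sequential type:
for `τ = σ_n…σ_1 ⟹ τ_1…τ_m`,
`⊥_τ = <x_n>.….<x_1>.[⊥_{τ_1}].….[⊥_{τ_m}].*`. -/
def botTm : STy → STm
  | .arr ins outs => popsN ins.length (botList outs)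
/-- The sequence of pushes `[⊥_{τ_1}].….[⊥_{τ_m}].*`. -/
def botList : List STy → STm
  | [] => .star
  | τ :: τs => .push (botTm τ) (botList τs)
end

/-!
`⊥_τ` first pops its arguments; its body `[⊥_{τ_1}].….[⊥_{τ_m}].*` is closed, so these
substitutions leave it unchanged. It then pushes the `⊥_{τ_i}`, which lie in `⟦τ_i⟧` by
recursion on the (nested) type.
-/

namespace STm

/-- Closedness, phrased as invariance under every substitution (for de Bruijn terms this is
equivalent to having no free index). -/
def IsClosed (M : STm) : Prop := ∀ σ, subst σ M = M

theorem IsClosed.popsN {B : STm} (hB : B.IsClosed) (k : Nat) : (popsN k B).IsClosed := by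
  induction k with
  | zero => exact hB
  | succ k ih => intro σ; simp only [_root_.popsN, subst, ih _]

end STm

open STm

mutual
theorem isClosed_botTm : ∀ τ : STy, (botTm τ).IsClosed
  | .arr _ outs => (isClosed_botList outs).popsN _
theorem isClosed_botList : ∀ τs : List STy, (botList τs).IsClosed
  | [] => fun _ => rfl
  | τ :: τs => fun σ => by
    simp only [botList, subst, isClosed_botTm τ σ, isClosed_botList τs σ]
end

theorem StackSet.length_eq :
    ∀ {τs : List STy} {L : List STm}, StackSet τs L → L.length = τs.length
  | [], _, h => by simp only [StackSet] at h; simp [h]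
  | _ :: _, [], h => h.elim
  | _ :: _, _ :: _, h => by simp [h.2.length_eq]

theorem StackSet.map_of_forall {f : STy → STm} :
    ∀ {τs : List STy}, (∀ τ ∈ τs, RunSet τ (f τ)) → StackSet τs (τs.map f)
  | [], _ => rfl
  | τ :: _, h =>
    ⟨h τ List.mem_cons_self, map_of_forall fun σ hσ => h σ (List.mem_cons_of_mem τ hσ)⟩

theorem sRun_popsN {B : STm} (hB : B.IsClosed) (T : List STm) :
    ∀ S : List STm, SRun (T ++ S.reverse, popsN S.length B) (T, B)
  | [] => by rw [List.reverse_nil, List.append_nil]; exact .refl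
  | N :: S => by
    have hstep : SMStep (T ++ (N :: S).reverse, popsN (S.length + 1) B)
        (T ++ S.reverse, popsN S.length B) := by
      simpa [popsN, subst1, hB.popsN _ _] using SMStep.pop (T ++ S.reverse) N (popsN S.length B)
    exact .head hstep (sRun_popsN hB T S)

theorem sRun_botList (outs : List STy) :
    ∀ S : List STm, SRun (S, botList outs) (S ++ outs.map botTm, .star) := by
  induction outs with
  | nil => intro S; rw [List.map_nil, List.append_nil]; exact .refl
  | cons τ τs ih =>
    intro S
    have hrest := ih (S ++ [botTm τ])
    rw [List.append_assoc, List.singleton_append] at hrest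
    exact .head (SMStep.push S (botTm τ) (botList τs)) hrest

/-- Every run set is inhabited: `⊥_τ ∈ ⟦τ⟧`. -/
theorem seq_runset_inhabited (τ : STy) : RunSet τ (botTm τ) := by
  obtain ⟨ins, outs⟩ := τ
  intro S hS
  refine ⟨outs.map botTm, StackSet.map_of_forall fun σ _ => seq_runset_inhabited σ, ?_⟩
  have hlen : S.reverse.length = ins.length := hS.length_eq
  have hpops := sRun_popsN (isClosed_botList outs) [] S.reverse
  rw [hlen, List.reverse_reverse, List.nil_append] at hpops
  exact hpops.trans (sRun_botList outs [])
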